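/- arXiv:0902.1806 — 5 statements merged into one kernel-verified Lean document; each statement's English description precedes it below -/
import Mathlib

section
/- If bipartite density matrices ρ_{AB} and σ_{A'B'} both satisfy the reduction criterion (ρ_A ⊗ I ≥ ρ_{AB} and σ_{A'} ⊗ I ≥ σ_{A'B'}), then their tensor product ρ_{AB} ⊗ σ_{A'B'}, viewed as a bipartite state with parts AA' and BB', also satisfies the reduction criterion. -/
open Matrix Kronecker
open scoped ComplexOrder

/-- A density matrix: positive semidefinite with unit trace. -/
def IsDensity {n : Type*} [Fintype n] (ρ : Matrix n n ℂ) : Prop :=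
  ρ.PosSemidef ∧ ρ.trace = 1

/-- Partial trace over the second (B) subsystem. -/
noncomputable def ptrB {a b : Type*} [Fintype b] (ρ : Matrix (a × b) (a × b) ℂ) :
    Matrix a a ℂ :=
  Matrix.of fun i k => ∑ j : b, ρ (i, j) (k, j)

/-- The reduction criterion: `ρ_A ⊗ I_B ≥ ρ_{AB}`. -/
def ReductionCriterion {a b : Type*} [Fintype a] [Fintype b] [DecidableEq a] [DecidableEq b]
    (ρ : Matrix (a × b) (a × b) ℂ) : Prop :=
  ((ptrB ρ) ⊗ₖ (1 : Matrix b b ℂ) - ρ).PosSemidef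

lemma kron_conjT {m n : Type*} (A : Matrix m m ℂ) (B : Matrix n n ℂ) :
    (A ⊗ₖ B)ᴴ = Aᴴ ⊗ₖ Bᴴ := by
  ext ⟨i, j⟩ ⟨k, l⟩
  simp [conjTranspose_apply, mul_comm]

lemma posSemidef_kron {m n : Type*} [Fintype m] [Fintype n] [DecidableEq m] [DecidableEq n]
    {A : Matrix m m ℂ} {B : Matrix n n ℂ} (hA : A.PosSemidef) (hB : B.PosSemidef) :
    (A ⊗ₖ B).PosSemidef := by
  exact hA.kronecker hB

lemma ptrB_posSemidef {a b : Type*} [Fintype a] [Fintype b]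
    {ρ : Matrix (a × b) (a × b) ℂ} (hρ : ρ.PosSemidef) : (ptrB ρ).PosSemidef := by
  have h : ptrB ρ = ∑ j : b, ρ.submatrix (fun i => (i, j)) (fun i => (i, j)) := by
    ext i k
    simp [ptrB, Matrix.sum_apply]
  rw [h]
  exact Finset.sum_induction _ _ (fun _ _ hx hy => hx.add hy) Matrix.PosSemidef.zero
    (fun j _ => hρ.submatrix _)

/-- the reduction criterion is closed under tensor products, across the
cut AA' | BB'. -/
theorem reduction_criterion_tensor {a b a' b' : Type*}
    [Fintype a] [DecidableEq a] [Fintype b] [DecidableEq b]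
    [Fintype a'] [DecidableEq a'] [Fintype b'] [DecidableEq b']
    (ρ : Matrix (a × b) (a × b) ℂ) (σ : Matrix (a' × b') (a' × b') ℂ)
    (hρ : IsDensity ρ) (hσ : IsDensity σ)
    (hρr : ReductionCriterion ρ) (hσr : ReductionCriterion σ) :
    ReductionCriterion
      (Matrix.reindex (Equiv.prodProdProdComm a b a' b') (Equiv.prodProdProdComm a b a' b')
        (ρ ⊗ₖ σ)) := by
  set e := Equiv.prodProdProdComm a b a' b'
  set M₁ := ptrB ρ ⊗ₖ (1 : Matrix b b ℂ)
  set M₂ := ptrB σ ⊗ₖ (1 : Matrix b' b' ℂ)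
  have key : ptrB (Matrix.reindex e e (ρ ⊗ₖ σ)) ⊗ₖ (1 : Matrix (b × b') (b × b') ℂ)
      - Matrix.reindex e e (ρ ⊗ₖ σ)
      = Matrix.reindex e e ((M₁ - ρ) ⊗ₖ M₂ + ρ ⊗ₖ (M₂ - σ)) := by
    ext ⟨⟨i, i'⟩, ⟨j, j'⟩⟩ ⟨⟨k, k'⟩, ⟨l, l'⟩⟩
    simp only [M₁, M₂, e, Matrix.sub_apply, Matrix.add_apply, Matrix.reindex_apply,
      Matrix.submatrix_apply, Equiv.prodProdProdComm_symm, Equiv.prodProdProdComm_apply, kroneckerMap_apply,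
      Matrix.one_apply, ptrB, Matrix.of_apply, Prod.mk.injEq, Fintype.sum_prod_type]
    by_cases hjl : j = l <;> by_cases hjl' : j' = l' <;>
      simp [hjl, hjl', Finset.sum_mul_sum, Finset.sum_sub_distrib, sub_mul, mul_sub, Finset.sum_mul, Finset.mul_sum] <;> first | rw [Finset.sum_comm] | ring
  unfold ReductionCriterion
  rw [key, Matrix.reindex_apply]
  refine Matrix.PosSemidef.submatrix ?_ _
  exact (posSemidef_kron hρr (posSemidef_kron (ptrB_posSemidef hσ.1) Matrix.PosSemidef.one)).add
    (posSemidef_kron hρ.1 hσr)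
end

section
/- Every separable bipartite density matrix has positive semidefinite partial transpose. -/
open Matrix Kronecker
open scoped ComplexOrder

/-- A bipartite density matrix is separable if it is a convex combination of product
density matrices. -/
def Separable {a b : Type*} [Fintype a] [Fintype b]
    (ρ : Matrix (a × b) (a × b) ℂ) : Prop :=
  ∃ (m : ℕ) (p : Fin m → ℝ) (ρA : Fin m → Matrix a a ℂ) (ρB : Fin m → Matrix b b ℂ),
    (∀ i, 0 ≤ p i) ∧ (∑ i, p i = 1) ∧ (∀ i, IsDensity (ρA i)) ∧ (∀ i, IsDensity (ρB i)) ∧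
    ρ = ∑ i, (p i : ℂ) • (ρA i ⊗ₖ ρB i)

/-- Partial transpose on the second (B) subsystem. -/
def ptB {a b : Type*} (ρ : Matrix (a × b) (a × b) ℂ) : Matrix (a × b) (a × b) ℂ :=
  Matrix.of fun p q => ρ (p.1, q.2) (q.1, p.2)

lemma kron_conjTranspose {a b : Type*} (A : Matrix a a ℂ) (B : Matrix b b ℂ) :
    (A ⊗ₖ B)ᴴ = Aᴴ ⊗ₖ Bᴴ := by
  ext ⟨i, j⟩ ⟨k, l⟩
  simp [conjTranspose_apply, kroneckerMap_apply]

lemma kron_psd {a b : Type*} [Fintype a] [DecidableEq a] [Fintype b] [DecidableEq b]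
    {A : Matrix a a ℂ} {B : Matrix b b ℂ} (hA : A.PosSemidef) (hB : B.PosSemidef) :
    (A ⊗ₖ B).PosSemidef := by
  exact hA.kronecker hB

lemma smul_psd {n : Type*} [Fintype n] {c : ℝ} (hc : 0 ≤ c)
    {M : Matrix n n ℂ} (hM : M.PosSemidef) : ((c : ℂ) • M).PosSemidef := by
  constructor
  · unfold Matrix.IsHermitian
    rw [Matrix.conjTranspose_smul, hM.1]
    congr 1
    simp
  · intro x
    exact (hM.smul (a := (c : ℂ)) (by exact_mod_cast hc)).2 x

/-- every separable bipartite density matrix has positive semidefinite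
partial transpose. -/
theorem separable_implies_ppt {a b : Type*}
    [Fintype a] [DecidableEq a] [Fintype b] [DecidableEq b]
    (ρ : Matrix (a × b) (a × b) ℂ) (hρ : IsDensity ρ) (hsep : Separable ρ) :
    (ptB ρ).PosSemidef := by
  obtain ⟨m, p, ρA, ρB, hp, hpsum, hA, hB, rfl⟩ := hsep
  have : ptB (∑ i, (p i : ℂ) • (ρA i ⊗ₖ ρB i)) =
      ∑ i, (p i : ℂ) • (ρA i ⊗ₖ (ρB i)ᵀ) := by
    ext ⟨i, j⟩ ⟨k, l⟩
    simp [ptB, Matrix.sum_apply, Matrix.smul_apply, kroneckerMap_apply, transpose_apply]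
  rw [this]
  refine Finset.sum_induction _ _ (fun x y hx hy => hx.add hy) Matrix.PosSemidef.zero ?_
  intro i _
  exact smul_psd (hp i) (kron_psd (hA i).1 (hB i).1.transpose)
end

section
/- For any density matrix σ on C^d ⊗ C^d with positive semidefinite partial transpose, Tr(σ Φ(d)) ≤ 1/d, where Φ(d) is the maximally entangled state. Equivalently, the fidelity F(σ, Φ(d)) = [Tr(σ Φ(d))]^{1/2} ≤ 1/√d. -/
open Matrix Kronecker
open scoped ComplexOrder

/-- The maximally entangled state `Φ(d)` on `ℂ^d ⊗ ℂ^d`. -/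
noncomputable def maxEnt (d : ℕ) : Matrix (Fin d × Fin d) (Fin d × Fin d) ℂ :=
  Matrix.of fun p q => if p.1 = p.2 ∧ q.1 = q.2 then (1 / d : ℂ) else 0

/-- For a PSD matrix, the real part of a cross term pair is dominated by the diagonal. -/
lemma psd_cross {n : Type*} [Fintype n] [DecidableEq n] {M : Matrix n n ℂ}
    (hM : M.PosSemidef) (p q : n) :
    (M p q).re + (M q p).re ≤ (M p p).re + (M q q).re := by
  set v : n → ℂ := Pi.single p 1 - Pi.single q 1 with hv
  have h := hM.dotProduct_mulVec_nonneg v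
  have hc : star v ⬝ᵥ (M *ᵥ v) = M p p - M p q - M q p + M q q := by
    have hs : star v = v := by
      rw [hv, star_sub]
      congr 1 <;> · funext i; simp [Pi.single_apply, apply_ite]
    rw [hs, hv, Matrix.mulVec_sub, Matrix.mulVec_single, Matrix.mulVec_single,
      sub_dotProduct, dotProduct_sub, dotProduct_sub,
      single_dotProduct, single_dotProduct,
      single_dotProduct, single_dotProduct]
    simp only [MulOpposite.op_one, one_smul, Matrix.col_apply]
    ring
  rw [hc] at h
  have h' := (Complex.le_def.mp h).1
  simp at h'
  linarith

lemma sum_swap_eq {d : ℕ} (f : Fin d × Fin d → ℝ) :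
    ∑ p : Fin d × Fin d, f p.swap = ∑ p : Fin d × Fin d, f p :=
  Fintype.sum_equiv (Equiv.prodComm _ _) _ _ fun _ => rfl

/-- a PPT density matrix `σ` on `ℂ^d ⊗ ℂ^d` has overlap at most `1/d`
with the maximally entangled state; equivalently, the fidelity
`F(σ, Φ(d)) = (Tr σΦ(d))^{1/2}` is at most `1/√d`. -/
theorem ppt_overlap_with_maxEnt (d : ℕ) (hd : 0 < d)
    (σ : Matrix (Fin d × Fin d) (Fin d × Fin d) ℂ)
    (hσ : IsDensity σ) (hppt : (ptB σ).PosSemidef) :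
    ((σ * maxEnt d).trace).re ≤ 1 / d ∧
    Real.sqrt ((σ * maxEnt d).trace).re ≤ 1 / Real.sqrt d := by
  set τ := ptB σ with hτ
  -- trace formula
  have htr : (σ * maxEnt d).trace = (1 / d : ℂ) * ∑ p : Fin d × Fin d, τ p p.swap := by
    have hpt : ∀ p : Fin d × Fin d, τ p p.swap = σ (p.1, p.1) (p.2, p.2) := fun p => rfl
    simp only [hpt, Matrix.trace, Matrix.diag, Matrix.mul_apply, maxEnt, Matrix.of_apply]
    rw [Finset.mul_sum]
    simp [Fintype.sum_prod_type, mul_ite, mul_zero, ite_and, Finset.sum_ite_eq,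
      Finset.sum_ite_eq']
    exact Finset.sum_congr rfl fun _ _ => Finset.sum_congr rfl fun _ _ => mul_comm _ _
  -- diagonal sum of τ equals 1
  have hdiag : ∑ p : Fin d × Fin d, (τ p p).re = 1 := by
    have h1 : ∀ p : Fin d × Fin d, τ p p = σ p p := fun p => rfl
    have h2 : (∑ p : Fin d × Fin d, σ p p) = σ.trace := rfl
    have : ∑ p : Fin d × Fin d, (τ p p).re = (σ.trace).re := by
      simp only [h1, ← h2, Complex.re_sum]
    rw [this, hσ.2]
    simp
  -- the key inequality
  have key : ∑ p : Fin d × Fin d, (τ p p.swap).re ≤ 1 := by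
    have h2 : (2:ℝ) * ∑ p : Fin d × Fin d, (τ p p.swap).re
        ≤ 2 * ∑ p : Fin d × Fin d, (τ p p).re := by
      have e1 : ∑ p : Fin d × Fin d, (τ p.swap p).re
          = ∑ p : Fin d × Fin d, (τ p p.swap).re := by
        have := sum_swap_eq (fun p => (τ p.swap p).re)
        simpa using this.symm
      have e2 : ∑ p : Fin d × Fin d, (τ p.swap p.swap).re
          = ∑ p : Fin d × Fin d, (τ p p).re :=
        sum_swap_eq (fun p => (τ p p).re)
      calc (2:ℝ) * ∑ p : Fin d × Fin d, (τ p p.swap).re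
          = ∑ p : Fin d × Fin d, ((τ p p.swap).re + (τ p.swap p).re) := by
            rw [Finset.sum_add_distrib, e1]; ring
        _ ≤ ∑ p : Fin d × Fin d, ((τ p p).re + (τ p.swap p.swap).re) :=
            Finset.sum_le_sum fun p _ => psd_cross hppt p p.swap
        _ = 2 * ∑ p : Fin d × Fin d, (τ p p).re := by
            rw [Finset.sum_add_distrib, e2]; ring
    linarith [hdiag ▸ h2]
  have hdpos : (0:ℝ) < d := Nat.cast_pos.mpr hd
  have hre : ((σ * maxEnt d).trace).re
      = (1 / d : ℝ) * ∑ p : Fin d × Fin d, (τ p p.swap).re := by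
    rw [htr]
    have : (1 / d : ℂ) = ((1 / d : ℝ) : ℂ) := by push_cast; ring
    rw [this, Complex.re_ofReal_mul, Complex.re_sum]
  have h1 : ((σ * maxEnt d).trace).re ≤ 1 / d := by
    rw [hre]
    calc (1 / d : ℝ) * ∑ p : Fin d × Fin d, (τ p p.swap).re
        ≤ (1 / d : ℝ) * 1 := by
          apply mul_le_mul_of_nonneg_left key (by positivity)
      _ = 1 / d := by ring
  refine ⟨h1, ?_⟩
  calc Real.sqrt ((σ * maxEnt d).trace).re ≤ Real.sqrt (1 / d) := Real.sqrt_le_sqrt h1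
    _ = 1 / Real.sqrt d := by rw [one_div, Real.sqrt_inv, one_div]
end

section
/- For any density matrix σ on C^d ⊗ C^d with positive semidefinite partial transpose, the trace distance from the maximally entangled state satisfies ‖σ − Φ(d)‖_Tr ≥ 1 − 1/√d. -/
open Matrix Kronecker
open scoped ComplexOrder

/-- The trace distance `‖ρ − σ‖_Tr = (1/2) Tr|ρ − σ|`, where `|X| = √(XᴴX)`. -/
noncomputable def traceDist {n : Type*} [Fintype n] [DecidableEq n]
    (ρ σ : Matrix n n ℂ) : ℝ :=
  (1 / 2) * (((Matrix.posSemidef_conjTranspose_mul_self (ρ - σ)).1.eigenvectorUnitary.1 *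
    diagonal ((fun x : ℝ => (x : ℂ)) ∘ Real.sqrt ∘
      (Matrix.posSemidef_conjTranspose_mul_self (ρ - σ)).1.eigenvalues) *
    (star (Matrix.posSemidef_conjTranspose_mul_self (ρ - σ)).1.eigenvectorUnitary :
      Matrix n n ℂ)).trace).re

theorem psd_entry_re_le {n : Type*} [Fintype n] [DecidableEq n] {τ : Matrix n n ℂ}
    (hτ : τ.PosSemidef) (p q : n) :
    (τ p q).re ≤ ((τ p p).re + (τ q q).re) / 2 := by
  have h := hτ.dotProduct_mulVec_nonneg (Pi.single p 1 - Pi.single q 1 : n → ℂ)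
  have hc : (τ q p) = star (τ p q) := by
    conv_lhs => rw [← hτ.1]
    rfl
  rw [Complex.nonneg_iff] at h
  have h1 := h.1
  have hval : (star (Pi.single p 1 - Pi.single q 1) ⬝ᵥ
      τ *ᵥ (Pi.single p 1 - Pi.single q 1)) = τ p p + τ q q - τ p q - τ q p := by
    have hmv : τ *ᵥ (Pi.single p 1 - Pi.single q 1) = fun i => τ i p - τ i q := by
      funext i
      simp [mulVec_sub, mulVec_single]
    have hstar : star (Pi.single p 1 - Pi.single q 1 : n → ℂ)
        = Pi.single p 1 - Pi.single q 1 := by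
      funext i
      by_cases hip : i = p <;> by_cases hiq : i = q <;>
        simp [hip, hiq, Pi.single_apply]
    rw [hmv, hstar, sub_dotProduct, single_dotProduct, single_dotProduct]
    ring
  rw [hval, hc] at h1
  simp [Complex.sub_re, Complex.add_re] at h1
  linarith



theorem trace_ptB_mul {a b : Type*} [Fintype a] [Fintype b]
    (A B : Matrix (a × b) (a × b) ℂ) :
    (ptB A * ptB B).trace = (A * B).trace := by
  have key : ∀ (M N : Matrix (a × b) (a × b) ℂ),
      (M * N).trace = ∑ x : (a × b) × (a × b), M x.1 x.2 * N x.2 x.1 := by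
    intro M N
    rw [Matrix.trace]
    simp only [Matrix.diag_apply, Matrix.mul_apply]
    rw [← Fintype.sum_prod_type']
  rw [key, key]
  let e : ((a × b) × (a × b)) ≃ ((a × b) × (a × b)) :=
    ⟨fun x => ((x.1.1, x.2.2), (x.2.1, x.1.2)),
     fun x => ((x.1.1, x.2.2), (x.2.1, x.1.2)), fun x => rfl, fun x => rfl⟩
  rw [← Equiv.sum_comp e (fun x => A x.1 x.2 * B x.2 x.1)]
  rfl



noncomputable def psi (d : ℕ) : Fin d × Fin d → ℂ :=
  fun p => if p.1 = p.2 then ((Real.sqrt d : ℂ))⁻¹ else 0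

theorem maxEnt_eq (d : ℕ) (hd : 0 < d) :
    maxEnt d = Matrix.replicateCol Unit (psi d) * (Matrix.replicateCol Unit (psi d))ᴴ := by
  ext p q
  simp only [maxEnt, psi, Matrix.mul_apply, Matrix.replicateCol_apply, Matrix.conjTranspose_apply,
    Matrix.of_apply, Finset.univ_unique, Finset.sum_singleton]
  by_cases h1 : p.1 = p.2 <;> by_cases h2 : q.1 = q.2 <;> simp [h1, h2]
  rw [← Complex.ofReal_inv, ← Complex.ofReal_mul, ← mul_inv,
    Real.mul_self_sqrt (by positivity)]
  norm_num

theorem maxEnt_posSemidef (d : ℕ) (hd : 0 < d) : (maxEnt d).PosSemidef := by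
  rw [maxEnt_eq d hd]
  exact posSemidef_self_mul_conjTranspose _

theorem maxEnt_trace (d : ℕ) (hd : 0 < d) : (maxEnt d).trace = 1 := by
  simp only [Matrix.trace, Matrix.diag_apply, maxEnt, Matrix.of_apply]
  rw [Fintype.sum_prod_type]
  simp only [and_self, Finset.sum_ite_eq, Finset.mem_univ, if_true]
  rw [Finset.sum_const, Finset.card_univ, Fintype.card_fin]
  rw [nsmul_eq_mul, one_div, mul_inv_cancel₀]
  exact_mod_cast hd.ne'

theorem maxEnt_sq (d : ℕ) (hd : 0 < d) : maxEnt d * maxEnt d = maxEnt d := by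
  ext p q
  simp only [Matrix.mul_apply, maxEnt, Matrix.of_apply]
  rw [Fintype.sum_prod_type]
  by_cases h1 : p.1 = p.2 <;> by_cases h2 : q.1 = q.2 <;>
    simp [h1, h2, ite_and, Finset.sum_ite_eq, Finset.mul_sum]
  · field_simp

theorem trace_bound {n : Type*} [Fintype n] [DecidableEq n]
    (Δ P : Matrix n n ℂ) (hΔ : Δ.IsHermitian) (hP : P.PosSemidef)
    (hPtr : P.trace = 1) (hΔtr : Δ.trace = 0) :
    (- ((P * Δ).trace)).re ≤
      (1 / 2) * (((Matrix.posSemidef_conjTranspose_mul_self Δ).1.eigenvectorUnitary.1 *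
    diagonal ((fun x : ℝ => (x : ℂ)) ∘ Real.sqrt ∘
      (Matrix.posSemidef_conjTranspose_mul_self Δ).1.eigenvalues) *
    (star (Matrix.posSemidef_conjTranspose_mul_self Δ).1.eigenvectorUnitary :
      Matrix n n ℂ)).trace).re := by
  set U : Matrix n n ℂ := (hΔ.eigenvectorUnitary : Matrix n n ℂ) with hUdef
  set lam := hΔ.eigenvalues with hlamdef
  have hU1 : star U * U = 1 := Matrix.mem_unitaryGroup_iff'.mp hΔ.eigenvectorUnitary.2
  have hU2 : U * star U = 1 := Matrix.mem_unitaryGroup_iff.mp hΔ.eigenvectorUnitary.2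
  have hspec : Δ = U * Matrix.diagonal (RCLike.ofReal ∘ lam) * star U :=
    hΔ.spectral_theorem
  set D : Matrix n n ℂ := Matrix.diagonal (RCLike.ofReal ∘ lam) with hDdef
  set Da : Matrix n n ℂ := Matrix.diagonal (fun i => ((|lam i| : ℝ) : ℂ)) with hDadef
  have hDa_psd : Matrix.PosSemidef Da := by
    refine Matrix.PosSemidef.diagonal fun i => ?_
    exact Complex.zero_le_real.2 (abs_nonneg (lam i))
  have hB_psd : Matrix.PosSemidef (U * Da * Uᴴ) :=
    hDa_psd.mul_mul_conjTranspose_same U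
  have hstarU : Uᴴ = star U := rfl
  have hB2 : (U * Da * Uᴴ) ^ 2 = Δᴴ * Δ := by
    rw [hΔ.eq, hspec, pow_two, hstarU]
    calc U * Da * star U * (U * Da * star U)
        = U * (Da * (star U * U) * Da) * star U := by noncomm_ring
      _ = U * (Da * Da) * star U := by rw [hU1]; noncomm_ring
      _ = U * (D * D) * star U := by
          have hfun : (fun i => ((|lam i| : ℝ) : ℂ) * ((|lam i| : ℝ) : ℂ))
              = fun i => (RCLike.ofReal ∘ lam) i * (RCLike.ofReal ∘ lam) i := by
            funext i
            show ((|lam i| : ℝ) : ℂ) * ((|lam i| : ℝ) : ℂ)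
              = ((lam i : ℝ) : ℂ) * ((lam i : ℝ) : ℂ)
            rw [← Complex.ofReal_mul, ← Complex.ofReal_mul, abs_mul_abs_self]
          rw [hDadef, hDdef, Matrix.diagonal_mul_diagonal, Matrix.diagonal_mul_diagonal, hfun]
      _ = U * D * star U * (U * D * star U) := by
          conv_rhs => rw [show U * D * star U * (U * D * star U)
            = U * (D * (star U * U) * D) * star U by noncomm_ring, hU1]
          noncomm_ring
  have hsqrt : (Matrix.posSemidef_conjTranspose_mul_self Δ).1.eigenvectorUnitary.1 *
      diagonal ((fun x : ℝ => (x : ℂ)) ∘ Real.sqrt ∘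
        (Matrix.posSemidef_conjTranspose_mul_self Δ).1.eigenvalues) *
      (star (Matrix.posSemidef_conjTranspose_mul_self Δ).1.eigenvectorUnitary :
        Matrix n n ℂ) = U * Da * Uᴴ := by
    have e1 := (Matrix.posSemidef_conjTranspose_mul_self Δ).1.cfc_eq Real.sqrt
    have e2 := hΔ.cfc_eq (fun x => |x|)
    rw [Matrix.IsHermitian.cfc, Unitary.conjStarAlgAut_apply] at e1 e2
    refine Eq.trans (b := cfc Real.sqrt (Δᴴ * Δ)) (by rw [e1]; rfl) ?_
    have hsa : IsSelfAdjoint Δ := hΔ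
    have h2 : Δᴴ * Δ = cfc (fun x : ℝ => x ^ 2) Δ := by
      rw [cfc_pow_id Δ 2 hsa, hΔ.eq, pow_two]
    rw [h2, ← cfc_comp Real.sqrt (fun x : ℝ => x ^ 2) Δ hsa]
    have h3 : (Real.sqrt ∘ fun x : ℝ => x ^ 2) = fun x => |x| := by
      funext x; simp [Real.sqrt_sq_eq_abs]
    rw [h3, e2]
    rfl
  have htrB : (U * Da * Uᴴ).trace = ∑ i, ((|lam i| : ℝ) : ℂ) := by
    rw [Matrix.trace_mul_cycle, show Uᴴ * U = 1 from hU1, one_mul, hDadef,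
      Matrix.trace_diagonal]
  have hlam_sum : ∑ i, lam i = 0 := by
    have h1 : Δ.trace = ∑ i, ((lam i : ℝ) : ℂ) := by
      conv_lhs => rw [hspec]
      rw [Matrix.trace_mul_cycle, show star U * U = 1 from hU1, one_mul, hDdef,
        Matrix.trace_diagonal]
      rfl
    rw [hΔtr] at h1
    have h2 : ((∑ i, lam i : ℝ) : ℂ) = 0 := by
      push_cast
      rw [← h1]
    exact_mod_cast h2
  set M := Uᴴ * P * U with hMdef
  have hM : M.PosSemidef := hP.conjTranspose_mul_mul_same U
  have htrM : M.trace = 1 := by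
    rw [hMdef, Matrix.trace_mul_cycle, show U * Uᴴ = 1 from hU2, one_mul, hPtr]
  have hdiag0 : ∀ i, 0 ≤ (M i i).re := by
    intro i
    have h := hM.dotProduct_mulVec_nonneg (Pi.single i 1)
    have hmv : M *ᵥ (Pi.single i 1) = fun j => M j i := by
      funext j
      simp [Matrix.mulVec_single]
    have hstar1 : star (Pi.single i 1 : n → ℂ) = Pi.single i 1 := by
      funext j
      by_cases hj : j = i <;> simp [hj, Pi.single_apply]
    rw [hmv, hstar1, single_dotProduct, one_mul] at h
    rw [Complex.nonneg_iff] at h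
    exact h.1
  have hdiag1 : ∀ i, (M i i).re ≤ 1 := by
    intro i
    have hsum : ∑ j, (M j j).re = 1 := by
      have h1 : (M.trace).re = 1 := by rw [htrM]; simp
      rw [Matrix.trace, Complex.re_sum] at h1
      exact h1
    calc (M i i).re ≤ ∑ j, (M j j).re :=
          Finset.single_le_sum (fun j _ => hdiag0 j) (Finset.mem_univ i)
      _ = 1 := hsum
  have hPDtr : (P * Δ).trace = ∑ i, ((lam i : ℝ) : ℂ) * M i i := by
    conv_lhs => rw [hspec]
    have e1 : P * (U * D * star U) = ((P * U) * D) * star U := by noncomm_ring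
    rw [e1, Matrix.trace_mul_comm]
    have e2 : star U * ((P * U) * D) = M * D := by rw [hMdef, hstarU]; noncomm_ring
    rw [e2, Matrix.trace]
    rw [hDdef]
    simp only [Matrix.diag_apply, Matrix.mul_diagonal, Function.comp_apply]
    congr 1
    funext i
    show M i i * ((lam i : ℝ) : ℂ) = ((lam i : ℝ) : ℂ) * M i i
    ring
  rw [hsqrt, htrB, hPDtr]
  have hre1 : (-(∑ i, ((lam i : ℝ) : ℂ) * M i i)).re = ∑ i, (-(lam i)) * (M i i).re := by
    rw [Complex.neg_re, Complex.re_sum, ← Finset.sum_neg_distrib]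
    congr 1
    funext i
    rw [show (((lam i : ℝ) : ℂ) * M i i).re = lam i * (M i i).re by
      simp [Complex.mul_re]]
    ring
  have hre2 : ((∑ i, ((|lam i| : ℝ) : ℂ)).re) = ∑ i, |lam i| := by
    rw [Complex.re_sum]
    simp
  rw [hre1, hre2]
  have key : ∀ i ∈ Finset.univ, (-(lam i)) * (M i i).re ≤ (|lam i| - lam i) / 2 := by
    intro i _
    rcases le_or_gt 0 (lam i) with h | h
    · rw [abs_of_nonneg h]
      have := mul_nonneg h (hdiag0 i)
      linarith
    · rw [abs_of_neg h]
      have h1 : (-(lam i)) * (M i i).re ≤ (-(lam i)) * 1 :=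
        mul_le_mul_of_nonneg_left (hdiag1 i) (by linarith)
      linarith
  calc ∑ i, (-(lam i)) * (M i i).re ≤ ∑ i, (|lam i| - lam i) / 2 :=
        Finset.sum_le_sum key
    _ = (∑ i, |lam i|) / 2 - (∑ i, lam i) / 2 := by
        rw [← Finset.sum_div, Finset.sum_sub_distrib, sub_div]
    _ = 1 / 2 * (∑ i, |lam i|) := by rw [hlam_sum]; ring

/-- any PPT density matrix on `ℂ^d ⊗ ℂ^d` is at trace distance at least
`1 − 1/√d` from the maximally entangled state. -/
theorem ppt_far_from_maxEnt (d : ℕ) (hd : 0 < d)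
    (σ : Matrix (Fin d × Fin d) (Fin d × Fin d) ℂ)
    (hσ : IsDensity σ) (hppt : (ptB σ).PosSemidef) :
    1 - 1 / Real.sqrt d ≤ traceDist σ (maxEnt d) := by
  set Φ := maxEnt d with hΦdef
  have hΦpsd : Φ.PosSemidef := maxEnt_posSemidef d hd
  have hΦtr : Φ.trace = 1 := maxEnt_trace d hd
  have hΦsq : Φ * Φ = Φ := maxEnt_sq d hd
  have hΔ : (σ - Φ).IsHermitian := hσ.1.1.sub hΦpsd.1
  have hΔtr : (σ - Φ).trace = 0 := by
    rw [Matrix.trace_sub, hσ.2, hΦtr, sub_self]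
  have hbound := trace_bound (σ - Φ) Φ hΔ hΦpsd hΦtr hΔtr
  -- rewrite the LHS of hbound
  have hlhs : (-(Φ * (σ - Φ)).trace) = 1 - (Φ * σ).trace := by
    rw [Matrix.mul_sub, Matrix.trace_sub, hΦsq, hΦtr]
    ring
  rw [hlhs] at hbound
  -- overlap bound : Re Tr(Φ σ) ≤ 1/d
  have hτtr : (ptB σ).trace = 1 := by
    rw [← hσ.2, Matrix.trace, Matrix.trace]
    apply Finset.sum_congr rfl
    intro p _
    show σ (p.1, p.2) (p.1, p.2) = σ p p
    rw [Prod.mk.eta]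
  have hexp : (ptB Φ * ptB σ).trace
      = ∑ p : Fin d × Fin d, (1 / d : ℂ) * ptB σ (p.2, p.1) p := by
    rw [Matrix.trace]
    simp only [Matrix.diag_apply, Matrix.mul_apply]
    congr 1
    funext p
    rw [Fintype.sum_prod_type]
    have hent : ∀ q : Fin d × Fin d, ptB Φ p q
        = if p.1 = q.2 ∧ q.1 = p.2 then (1 / d : ℂ) else 0 := by
      intro q
      rfl
    simp only [hent]
    simp [ite_and, Finset.sum_ite_eq, Finset.sum_ite_eq', ite_mul, zero_mul]
  have hoverlap : ((Φ * σ).trace).re ≤ 1 / d := by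
    rw [← trace_ptB_mul, hexp, Complex.re_sum]
    have hterm : ∀ p : Fin d × Fin d,
        ((1 / d : ℂ) * ptB σ (p.2, p.1) p).re
          = (1 / (d : ℝ)) * (ptB σ (p.2, p.1) p).re := by
      intro p
      have : (1 / d : ℂ) = ((1 / (d : ℝ) : ℝ) : ℂ) := by push_cast; ring
      rw [this]
      simp [Complex.mul_re]
    calc ∑ p : Fin d × Fin d, ((1 / d : ℂ) * ptB σ (p.2, p.1) p).re
        ≤ ∑ p : Fin d × Fin d, (1 / (d : ℝ)) *
            (((ptB σ (p.2, p.1) (p.2, p.1)).re + (ptB σ p p).re) / 2) := by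
          refine Finset.sum_le_sum fun p _ => ?_
          rw [hterm p]
          refine mul_le_mul_of_nonneg_left ?_ (by positivity)
          exact psd_entry_re_le hppt (p.2, p.1) p
      _ = 1 / d := by
          rw [← Finset.mul_sum, ← Finset.sum_div, Finset.sum_add_distrib]
          have hswap : ∑ p : Fin d × Fin d, (ptB σ (p.2, p.1) (p.2, p.1)).re
              = ∑ p : Fin d × Fin d, (ptB σ p p).re := by
            exact Equiv.sum_comp (Equiv.prodComm (Fin d) (Fin d))
              (fun p => (ptB σ p p).re)
          have hdiagsum : ∑ p : Fin d × Fin d, (ptB σ p p).re = 1 := by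
            have h1 : ((ptB σ).trace).re = 1 := by rw [hτtr]; simp
            rw [Matrix.trace, Complex.re_sum] at h1
            exact h1
          rw [hswap, hdiagsum]
          norm_num
  -- conclude
  have hfinal : 1 - 1 / (d : ℝ) ≤ traceDist σ (maxEnt d) := by
    have : (1 - (Φ * σ).trace).re = 1 - ((Φ * σ).trace).re := by
      simp [Complex.sub_re]
    rw [this] at hbound
    calc 1 - 1 / (d : ℝ) ≤ 1 - ((Φ * σ).trace).re := by linarith
      _ ≤ traceDist σ (maxEnt d) := hbound
  have hd1 : (1 : ℝ) ≤ (d : ℝ) := by exact_mod_cast hd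
  have hsqrtle : Real.sqrt d ≤ d := by
    have h2 : (d : ℝ) ≤ (d : ℝ) ^ 2 := by nlinarith
    have := Real.sqrt_le_sqrt h2
    rwa [Real.sqrt_sq (by positivity)] at this
  have hsqrtpos : 0 < Real.sqrt d := Real.sqrt_pos.2 (by positivity)
  have : 1 / (d : ℝ) ≤ 1 / Real.sqrt d :=
    one_div_le_one_div_of_le hsqrtpos hsqrtle
  linarith
end

section
/- A vector x is majorized by y if and only if x = Dy for some doubly stochastic matrix D. -/
open Matrix

/-- A doubly stochastic matrix: nonnegative entries, all row and column sums equal 1. -/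
def IsDoublyStochastic {n : Type*} [Fintype n] (D : Matrix n n ℝ) : Prop :=
  (∀ i j, 0 ≤ D i j) ∧ (∀ i, ∑ j, D i j = 1) ∧ (∀ j, ∑ i, D i j = 1)

/-- Majorization `x ≺ y`: for every `k`, the sum of the `k` largest entries of `x` is at
most the sum of the `k` largest entries of `y` (equivalently, any subset-sum of `x` is
dominated by some equal-size subset-sum of `y`), and the total sums are equal. -/
def Majorizes {n : Type*} [Fintype n] (x y : n → ℝ) : Prop :=
  (∀ s : Finset n, ∃ t : Finset n, t.card = s.card ∧ ∑ i ∈ s, x i ≤ ∑ i ∈ t, y i) ∧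
  ∑ i, x i = ∑ i, y i

open Finset

lemma strictMono_val_le {k n : ℕ} (f : Fin k → Fin n) (hf : StrictMono f) (i : Fin k) :
    (i : ℕ) ≤ (f i : ℕ) := by
  induction' hi : (i : ℕ) with m ih generalizing i
  · exact Nat.zero_le _
  · have hm : m < k := by omega
    have := ih ⟨m, hm⟩ rfl
    have h2 : f ⟨m, hm⟩ < f i := hf (by simp [Fin.lt_def, hi])
    omega

lemma topk_sum {n k : ℕ} (g : Fin n → ℝ) (hg : Antitone g) (u : Finset (Fin n))
    (hu : u.card = k) (hk : k ≤ n) :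
    ∑ i ∈ u, g i ≤ ∑ j : Fin k, g (Fin.castLE hk j) := by
  have hmap : Finset.univ.map (u.orderEmbOfFin hu).toEmbedding = u := by
    apply Finset.eq_of_subset_of_card_le
    · intro a ha
      simp only [Finset.mem_map] at ha
      obtain ⟨j, -, rfl⟩ := ha
      exact Finset.orderEmbOfFin_mem u hu j
    · simp [hu]
  rw [← hmap, Finset.sum_map]
  apply Finset.sum_le_sum
  intro j _
  apply hg
  have := strictMono_val_le _ (u.orderEmbOfFin hu).strictMono j
  exact Fin.le_def.2 (by simpa using this)

lemma key_lemma {n : ℕ} {x y : Fin n → ℝ} (h : Majorizes x y) (c : Fin n → ℝ) :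
    ∃ σ : Equiv.Perm (Fin n), ∑ i, c i * x i ≤ ∑ i, c i * y (σ i) := by
  classical
  set τ : Equiv.Perm (Fin n) := Tuple.sort (fun i => -c i) with hτdef
  have hτ : Monotone ((fun i => -c i) ∘ τ) := Tuple.monotone_sort _
  set ρ : Equiv.Perm (Fin n) := Tuple.sort (fun i => -y i) with hρdef
  have hρ : Monotone ((fun i => -y i) ∘ ρ) := Tuple.monotone_sort _
  have hya : Antitone (fun i => y (ρ i)) := by
    intro a b hab
    have := hρ hab
    simpa using this
  set A : ℕ → ℝ := fun i => if h : i < n then c (τ ⟨i, h⟩) else 0 with hA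
  set B : ℕ → ℝ := fun i => if h : i < n then x (τ ⟨i, h⟩) else 0 with hB
  set Dd : ℕ → ℝ := fun i => if h : i < n then y (ρ ⟨i, h⟩) else 0 with hD
  -- prefix sums
  have hBsum : ∀ k (hk : k ≤ n), ∑ i ∈ range k, B i = ∑ j : Fin k, x (τ (Fin.castLE hk j)) := by
    intro k hk
    rw [← Fin.sum_univ_eq_sum_range]
    apply Finset.sum_congr rfl
    intro j _
    have : (j : ℕ) < n := lt_of_lt_of_le j.2 hk
    simp only [hB, dif_pos this]
    rfl
  have hDsum : ∀ k (hk : k ≤ n), ∑ i ∈ range k, Dd i = ∑ j : Fin k, y (ρ (Fin.castLE hk j)) := by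
    intro k hk
    rw [← Fin.sum_univ_eq_sum_range]
    apply Finset.sum_congr rfl
    intro j _
    have : (j : ℕ) < n := lt_of_lt_of_le j.2 hk
    simp only [hD, dif_pos this]
    rfl
  -- G
  set G : ℕ → ℝ := fun k => ∑ i ∈ range k, (B i - Dd i) with hG
  have hGle : ∀ k, k ≤ n → G k ≤ 0 := by
    intro k hk
    have hs : ∑ i ∈ range k, B i = ∑ i ∈ (Finset.univ.map (Fin.castLEEmb hk)).map τ.toEmbedding, x i := by
      rw [Finset.sum_map, Finset.sum_map, hBsum k hk]
      rfl
    obtain ⟨t, ht, hle⟩ := h.1 ((Finset.univ.map (Fin.castLEEmb hk)).map τ.toEmbedding)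
    have htcard : t.card = k := by simpa using ht
    have hty : ∑ i ∈ t, y i ≤ ∑ i ∈ range k, Dd i := by
      rw [hDsum k hk]
      have : ∑ i ∈ t, y i = ∑ j ∈ t.map ρ.symm.toEmbedding, (fun i => y (ρ i)) j := by
        rw [Finset.sum_map]
        apply Finset.sum_congr rfl
        intro i _
        simp
      rw [this]
      exact topk_sum _ hya _ (by simpa using htcard) hk
    have : ∑ i ∈ range k, B i ≤ ∑ i ∈ range k, Dd i := by
      calc ∑ i ∈ range k, B i = _ := hs
        _ ≤ ∑ i ∈ t, y i := hle
        _ ≤ _ := hty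
    simpa [hG, Finset.sum_sub_distrib, sub_nonpos] using this
  have hGn : G n = 0 := by
    have h1 : ∑ i ∈ range n, B i = ∑ i, x i := by
      rw [hBsum n le_rfl]
      simpa using Equiv.sum_comp τ x
    have h2 : ∑ i ∈ range n, Dd i = ∑ i, y i := by
      rw [hDsum n le_rfl]
      simpa using Equiv.sum_comp ρ y
    simp [hG, Finset.sum_sub_distrib, h1, h2, h.2]
  -- by parts
  have hparts := Finset.sum_range_by_parts A (fun i => B i - Dd i) n
  have hGdef : ∀ m, ∑ i ∈ range m, (B i - Dd i) = G m := fun m => rfl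
  have hmain : ∑ i ∈ range n, A i • (B i - Dd i) ≤ 0 := by
    rw [hparts, hGdef, hGn, smul_zero, zero_sub, neg_nonpos]
    apply Finset.sum_nonneg
    intro i hi
    rw [Finset.mem_range] at hi
    have hi1 : i + 1 < n := by omega
    have hi0 : i < n := by omega
    have hAle : A (i + 1) ≤ A i := by
      simp only [hA, dif_pos hi1, dif_pos hi0]
      have := hτ (show (⟨i, hi0⟩ : Fin n) ≤ ⟨i + 1, hi1⟩ from by simp [Fin.le_def])
      simpa using this
    have := hGle (i + 1) (by omega)
    rw [hGdef]
    have : (0:ℝ) ≤ (A (i+1) - A i) * G (i+1) :=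
      mul_nonneg_of_nonpos_of_nonpos (by linarith) this
    simpa [smul_eq_mul] using this
  -- conclude
  refine ⟨τ.symm.trans ρ, ?_⟩
  have e1 : ∑ i ∈ range n, A i * B i = ∑ i, c i * x i := by
    rw [← Fin.sum_univ_eq_sum_range (fun i => A i * B i) n]
    rw [← Equiv.sum_comp τ (fun i => c i * x i)]
    apply Finset.sum_congr rfl
    intro j _
    simp [hA, hB, j.2]
  have e2 : ∑ i ∈ range n, A i * Dd i = ∑ i, c i * y ((τ.symm.trans ρ) i) := by
    rw [← Fin.sum_univ_eq_sum_range (fun i => A i * Dd i) n]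
    rw [← Equiv.sum_comp τ (fun i => c i * y ((τ.symm.trans ρ) i))]
    apply Finset.sum_congr rfl
    intro j _
    simp [hA, hD, j.2]
  have : ∑ i ∈ range n, (A i * B i - A i * Dd i) ≤ 0 := by
    simpa [smul_eq_mul, mul_sub] using hmain
  rw [Finset.sum_sub_distrib, sub_nonpos, e1, e2] at this
  exact this

lemma mem_convexHull_of_majorizes {n : ℕ} {x y : Fin n → ℝ} (h : Majorizes x y) :
    x ∈ convexHull ℝ (Set.range fun σ : Equiv.Perm (Fin n) => y ∘ σ) := by
  classical
  by_contra hx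
  have hfin : (Set.range fun σ : Equiv.Perm (Fin n) => y ∘ σ).Finite := Set.finite_range _
  obtain ⟨f, u, hfu, hux⟩ := geometric_hahn_banach_closed_point
    (convex_convexHull ℝ _) (hfin.isClosed_convexHull ℝ) hx
  set c : Fin n → ℝ := fun i => f (fun j => if i = j then 1 else 0) with hc
  have hf : ∀ z : Fin n → ℝ, f z = ∑ i, c i * z i := by
    intro z
    conv_lhs => rw [pi_eq_sum_univ z]
    rw [map_sum]
    apply Finset.sum_congr rfl
    intro i _
    rw [_root_.map_smul]
    simp [hc, mul_comm]
  obtain ⟨σ, hσ⟩ := key_lemma h c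
  have h1 : f (y ∘ σ) < u := hfu _ (subset_convexHull ℝ _ ⟨σ, rfl⟩)
  have h2 : u < f x := hux
  rw [hf] at h1 h2
  have : ∑ i, c i * (y ∘ σ) i = ∑ i, c i * y (σ i) := rfl
  linarith [hσ]

lemma hard_dir {n : ℕ} {x y : Fin n → ℝ} (h : Majorizes x y) :
    ∃ D : Matrix (Fin n) (Fin n) ℝ, IsDoublyStochastic D ∧ x = D *ᵥ y := by
  classical
  obtain ⟨ι, hι, w, z, hw0, hw1, hz, hx⟩ :=
    mem_convexHull_iff_exists_fintype.1 (mem_convexHull_of_majorizes h)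
  choose g hg using hz
  refine ⟨fun a b => ∑ i, if b = g i a then w i else 0, ⟨?_, ?_, ?_⟩, ?_⟩
  · intro a b
    refine Finset.sum_nonneg fun i _ => ?_
    by_cases hh : b = g i a <;> simp [hh, hw0 i]
  · intro a
    rw [Finset.sum_comm]
    rw [← hw1]
    apply Finset.sum_congr rfl
    intro i _
    simp
  · intro b
    rw [Finset.sum_comm]
    rw [← hw1]
    apply Finset.sum_congr rfl
    intro i _
    have : ∀ a : Fin n, (b = g i a) ↔ (a = (g i).symm b) := fun a => by
      constructor <;> intro h' <;> simp [h']
    simp only [this]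
    simp
  · funext a
    have lhs : x a = ∑ i, w i * y (g i a) := by
      rw [← hx]
      simp only [Finset.sum_apply, Pi.smul_apply, smul_eq_mul]
      refine Finset.sum_congr rfl fun i _ => ?_
      rw [← hg i]
      rfl
    rw [lhs]
    simp only [mulVec, dotProduct, Finset.sum_mul]
    rw [Finset.sum_comm]
    refine Finset.sum_congr rfl fun i _ => ?_
    simp only [ite_mul, zero_mul]
    rw [Finset.sum_ite_eq']
    simp

lemma easy_dir {n : ℕ} {x y : Fin n → ℝ} (D : Matrix (Fin n) (Fin n) ℝ)
    (hD : IsDoublyStochastic D) (hx : x = D *ᵥ y) : Majorizes x y := by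
  classical
  have hDm : D ∈ doublyStochastic ℝ (Fin n) :=
    mem_doublyStochastic_iff_sum.2 ⟨hD.1, hD.2.1, hD.2.2⟩
  obtain ⟨w, hw0, hw1, hW⟩ := exists_eq_sum_perm_of_mem_doublyStochastic hDm
  have hxa : ∀ a, x a = ∑ σ : Equiv.Perm (Fin n), w σ * y (σ a) := by
    intro a
    rw [hx, ← hW]
    simp only [mulVec, dotProduct, Equiv.Perm.permMatrix, Matrix.sum_apply, Matrix.smul_apply,
      PEquiv.toMatrix_apply, Equiv.toPEquiv_apply, Option.mem_def, Option.some.injEq,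
      smul_eq_mul, mul_ite, mul_one, mul_zero, Finset.sum_mul, ite_mul, zero_mul]
    rw [Finset.sum_comm]
    refine Finset.sum_congr rfl fun σ _ => ?_
    rw [Finset.sum_ite_eq]
    simp
  constructor
  · intro s
    obtain ⟨σm, -, hσm⟩ := Finset.exists_max_image Finset.univ
      (fun σ : Equiv.Perm (Fin n) => ∑ i ∈ s, y (σ i)) ⟨1, Finset.mem_univ 1⟩
    refine ⟨s.image σm, Finset.card_image_of_injective s σm.injective, ?_⟩
    rw [Finset.sum_image (fun a _ b _ hab => σm.injective hab)]
    calc ∑ i ∈ s, x i = ∑ σ : Equiv.Perm (Fin n), w σ * ∑ i ∈ s, y (σ i) := by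
          simp only [hxa]
          rw [Finset.sum_comm]
          simp [Finset.mul_sum]
      _ ≤ ∑ σ : Equiv.Perm (Fin n), w σ * ∑ i ∈ s, y (σm i) := by
          apply Finset.sum_le_sum
          intro σ _
          exact mul_le_mul_of_nonneg_left (hσm σ (Finset.mem_univ σ)) (hw0 σ)
      _ = ∑ i ∈ s, y (σm i) := by rw [← Finset.sum_mul, hw1, one_mul]
  · calc ∑ i, x i = ∑ σ : Equiv.Perm (Fin n), w σ * ∑ i, y (σ i) := by
          simp only [hxa]
          rw [Finset.sum_comm]
          simp [Finset.mul_sum]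
      _ = ∑ σ : Equiv.Perm (Fin n), w σ * ∑ i, y i := by
          apply Finset.sum_congr rfl
          intro σ _
          rw [Equiv.sum_comp σ y]
      _ = ∑ i, y i := by rw [← Finset.sum_mul, hw1, one_mul]


/-- `x` is majorized by `y` iff `x = D y` for some doubly stochastic `D`
(Hardy–Littlewood–Pólya / Birkhoff). -/
theorem majorizes_iff_doublyStochastic {n : ℕ} (x y : Fin n → ℝ) :
    Majorizes x y ↔ ∃ D : Matrix (Fin n) (Fin n) ℝ, IsDoublyStochastic D ∧ x = D *ᵥ y := by
  constructor
  · exact fun h => hard_dir h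
  · rintro ⟨D, hD, hx⟩
    exact easy_dir D hD hx
end
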